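/- Let m be an integer, ω_L, ω₀ real, set ω̃ = (1/2)·√(ω_L² + ω₀²), and assume ω̃ > 0. Let σ ∈ {+1, −1}, Z = σ·√(2·ω̃·(2|m|+1)), ε = m·ω_L + 2(|m|+2)·ω̃, and u(r) = r^{|m|+1/2}·e^{−ω̃ r²/2}·(r + σ·√((2|m|+1)/(2ω̃))). Then for every r > 0, −u″(r) + ((m² − 1/4)/r² + ω̃² r² + Z/r)·u(r) = (ε − m·ω_L)·u(r). -/

import Mathlib

/-!
Write `a = |m| + 1/2`, so that `m² - 1/4 = a(a - 1)`. The Gaussian-power factor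
`g(r) = r^a e^{-ω̃r²/2}` has logarithmic derivative `L = a/r - ω̃r` and satisfies
`g'' = (a(a-1)/r² - ω̃(2a+1) + ω̃²r²) g`, so the centrifugal and oscillator terms cancel
against `g''` for `u = g·(r + c)`. What remains is `ω̃(2a+3)u` plus `g·(Z - 2ω̃c + (Zc - 2a)/r)`,
and the constraint on `Z` is exactly what makes `c = Z/(2ω̃)` satisfy `ω̃c² = a`.
-/

open Real

theorem sqrt_mul_eq_mul_sqrt_div {t k : ℝ} (ht : 0 ≤ t) : √(t * k) = t * √(k / t) := by
  rcases ht.eq_or_lt with rfl | ht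
  · simp
  rw [show t * k = t ^ 2 * (k / t) by field_simp, sqrt_mul (sq_nonneg t), sqrt_sq ht.le]

noncomputable def radialGaussian (a w x : ℝ) : ℝ := x ^ a * exp (-w * x ^ 2 / 2)

section RadialGaussian

variable {a w c x : ℝ}

theorem hasDerivAt_radialGaussian (hx : 0 < x) :
    HasDerivAt (radialGaussian a w) ((a / x - w * x) * radialGaussian a w x) x := by
  have hpow : HasDerivAt (fun y => y ^ a) (a * x ^ (a - 1)) x :=
    hasDerivAt_rpow_const (Or.inl hx.ne')
  have hexp : HasDerivAt (fun y => exp (-w * y ^ 2 / 2)) (exp (-w * x ^ 2 / 2) * (-w * x)) x := by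
    refine (((hasDerivAt_pow 2 x).const_mul (-w)).div_const 2).exp.congr_deriv ?_
    push_cast
    ring
  refine (hpow.fun_mul hexp).congr_deriv ?_
  rw [radialGaussian, rpow_sub_one hx.ne']
  field_simp
  ring

theorem hasDerivAt_radialGaussian_mul_affine (hx : 0 < x) :
    HasDerivAt (fun y => radialGaussian a w y * (y + c))
      (((a / x - w * x) * (x + c) + 1) * radialGaussian a w x) x := by
  refine ((hasDerivAt_radialGaussian hx).fun_mul ((hasDerivAt_id' x).add_const c)).congr_deriv ?_
  ring

theorem deriv_deriv_radialGaussian_mul_affine (hx : 0 < x) :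
    deriv (deriv fun y => radialGaussian a w y * (y + c)) x =
      ((a * (a - 1) / x ^ 2 - w * (2 * a + 1) + w ^ 2 * x ^ 2) * (x + c)
        + 2 * (a / x - w * x)) * radialGaussian a w x := by
  have hfirst : deriv (fun y => radialGaussian a w y * (y + c)) =ᶠ[nhds x]
      fun y => ((a / y - w * y) * (y + c) + 1) * radialGaussian a w y :=
    Filter.eventuallyEq_of_mem (Ioi_mem_nhds hx)
      fun y hy => (hasDerivAt_radialGaussian_mul_affine hy).deriv
  have hinv : HasDerivAt (fun y => a / y) (-a / x ^ 2) x := by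
    simpa [div_eq_mul_inv] using (hasDerivAt_inv hx.ne').const_mul a
  have hsecond := (((hinv.fun_sub ((hasDerivAt_id' x).const_mul w)).fun_mul
    ((hasDerivAt_id' x).add_const c)).add_const 1).fun_mul
      (hasDerivAt_radialGaussian (a := a) (w := w) hx)
  rw [hfirst.deriv_eq, hsecond.deriv]
  field_simp
  ring

theorem radialGaussian_mul_affine_eigen {Z : ℝ} (hZ : Z = 2 * w * c) (hc : w * c ^ 2 = a)
    (hx : 0 < x) :
    -deriv (deriv fun y => radialGaussian a w y * (y + c)) x
      + (a * (a - 1) / x ^ 2 + w ^ 2 * x ^ 2 + Z / x) * (radialGaussian a w x * (x + c))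
    = w * (2 * a + 3) * (radialGaussian a w x * (x + c)) := by
  rw [deriv_deriv_radialGaussian_mul_affine hx, hZ]
  field_simp
  linear_combination (2 * x * radialGaussian a w x) * hc

end RadialGaussian

theorem hooke_magnetic_n1_general (m : ℤ) (ωL : ℝ) (ωt : ℝ)
    (hpos : 0 < ωt)
    (σ : ℝ) (hσ : σ = 1 ∨ σ = -1) (Z ε : ℝ)
    (hZ : Z = σ * Real.sqrt (2 * ωt * (2 * |(m : ℝ)| + 1)))
    (hε : ε = (m : ℝ) * ωL + 2 * (|(m : ℝ)| + 2) * ωt)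
    (u : ℝ → ℝ)
    (hu : u = fun r : ℝ =>
      r ^ (|(m : ℝ)| + 1 / 2) * Real.exp (-ωt * r ^ 2 / 2) *
        (r + σ * Real.sqrt ((2 * |(m : ℝ)| + 1) / (2 * ωt))))
    (r : ℝ) (hr : 0 < r) :
    -deriv (deriv u) r
      + (((m : ℝ) ^ 2 - 1 / 4) / r ^ 2 + ωt ^ 2 * r ^ 2 + Z / r) * u r
    = (ε - (m : ℝ) * ωL) * u r := by
  set a : ℝ := |(m : ℝ)| + 1 / 2
  set c : ℝ := σ * √((2 * |(m : ℝ)| + 1) / (2 * ωt))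
  have hσ2 : σ ^ 2 = 1 := by rcases hσ with rfl | rfl <;> norm_num
  have hcoupling : Z = 2 * ωt * c := by
    rw [hZ, sqrt_mul_eq_mul_sqrt_div (by positivity)]
    ring
  have hc : ωt * c ^ 2 = a := by
    rw [mul_pow, hσ2, one_mul, sq_sqrt (by positivity)]
    field_simp
    ring
  have hm : (m : ℝ) ^ 2 - 1 / 4 = a * (a - 1) := by rw [← sq_abs]; ring
  have hu_radial : u = fun y => radialGaussian a ωt y * (y + c) := hu
  rw [hm, hε, hu_radial, radialGaussian_mul_affine_eigen hcoupling hc hr]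
  ring

/-- Exact n = 1 solution for two planar charged particles in a uniform
magnetic field: energy `ε = mω_L + 2(|m|+2)ω̃` under
`Z = ±√(2ω̃(2|m|+1))`, with `ω̃ = (1/2)√(ω_L² + ω₀²)`. -/
theorem hooke_magnetic_n1 (m : ℤ) (ωL ω₀ : ℝ) (ωt : ℝ)
    (hωt : ωt = (1 / 2) * Real.sqrt (ωL ^ 2 + ω₀ ^ 2)) (hpos : 0 < ωt)
    (σ : ℝ) (hσ : σ = 1 ∨ σ = -1) (Z ε : ℝ)
    (hZ : Z = σ * Real.sqrt (2 * ωt * (2 * |(m : ℝ)| + 1)))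
    (hε : ε = (m : ℝ) * ωL + 2 * (|(m : ℝ)| + 2) * ωt)
    (u : ℝ → ℝ)
    (hu : u = fun r : ℝ =>
      r ^ (|(m : ℝ)| + 1 / 2) * Real.exp (-ωt * r ^ 2 / 2) *
        (r + σ * Real.sqrt ((2 * |(m : ℝ)| + 1) / (2 * ωt))))
    (r : ℝ) (hr : 0 < r) :
    -deriv (deriv u) r
      + (((m : ℝ) ^ 2 - 1 / 4) / r ^ 2 + ωt ^ 2 * r ^ 2 + Z / r) * u r
    = (ε - (m : ℝ) * ωL) * u r :=
  hooke_magnetic_n1_general m ωL ωt hpos σ hσ Z ε hZ hε u hu r hr
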